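/- arXiv:2012.14196 — 3 statements merged into one kernel-verified Lean document; each statement's English description precedes it below -/
import Mathlib

section
/- For every m ≥ 1 there exist constants c_k > 0 (k = 1, 2, …), independent of p, such that for every p ∈ ℕ there is a smooth function d̃_p : ℝ^m × ℝ^m → ℝ satisfying: (1) |d̃_p(x, y) − |x − y|| < 1/√p for all x, y ∈ ℝ^m, and (2) for every multi-index α with |α| ≥ 1, |∂^α_x d̃_p(x, y)| ≤ c_{|α|} p^{(|α|−1)/2} for all x, y ∈ ℝ^m. -/
/-!
Take `d(x, y) = √(ε² + ‖x - y‖²)` with `ε = 1 / (2√p)`; it lies within `ε` of `‖x - y‖`.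
It is the Euclidean norm of `(ε, x - y) ∈ ℝ × ℝ^m`, so its `x`-derivatives are controlled by
those of the norm at points of norm at least `ε`. The norm is positively homogeneous of degree
one, hence its `k`-th derivative is homogeneous of degree `1 - k`; being bounded on the compact
unit sphere, it is `O(ε^(1-k)) = O(p^((k-1)/2))` outside the ball of radius `ε`.
-/

section CompRight

variable {𝕜 E F G : Type*} [NontriviallyNormedField 𝕜] [NormedAddCommGroup E]
  [NormedSpace 𝕜 E] [NormedAddCommGroup F] [NormedSpace 𝕜 F] [NormedAddCommGroup G]
  [NormedSpace 𝕜 G]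

theorem ContinuousLinearMap.iteratedFDeriv_comp_right_of_contDiffAt
    (g : G →L[𝕜] E) {f : E → F} {x : G} {i : ℕ} (hf : ContDiffAt 𝕜 i f (g x)) :
    iteratedFDeriv 𝕜 i (f ∘ g) x =
      (iteratedFDeriv 𝕜 i f (g x)).compContinuousLinearMap fun _ => g := by
  obtain ⟨u, hu, hxu, hfu⟩ := ContDiffWithinAt.contDiffOn' le_rfl (by simp) hf
  rw [Set.insert_eq_of_mem (Set.mem_univ _), Set.univ_inter] at hfu
  have hu' : IsOpen (g ⁻¹' u) := hu.preimage g.continuous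
  rw [← iteratedFDerivWithin_of_isOpen i hu' hxu, ← iteratedFDerivWithin_of_isOpen i hu hxu]
  exact g.iteratedFDerivWithin_comp_right hfu hu.uniqueDiffOn hu'.uniqueDiffOn hxu le_rfl

theorem ContinuousLinearMap.norm_iteratedFDeriv_comp_right_le
    (g : G →L[𝕜] E) {f : E → F} {x : G} {i : ℕ} (hf : ContDiffAt 𝕜 i f (g x)) :
    ‖iteratedFDeriv 𝕜 i (f ∘ g) x‖ ≤ ‖iteratedFDeriv 𝕜 i f (g x)‖ * ‖g‖ ^ i := by
  rw [g.iteratedFDeriv_comp_right_of_contDiffAt hf]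
  simpa using ContinuousMultilinearMap.norm_compContinuousLinearMap_le _ fun _ : Fin i => g

end CompRight

section Scaling

variable {E F : Type*} [NormedAddCommGroup E] [NormedSpace ℝ E]
  [NormedAddCommGroup F] [NormedSpace ℝ F]

theorem norm_iteratedFDeriv_smul_comp_smul_le {f : E → F} {x : E} (a c : ℝ) {k : ℕ}
    (hf : ContDiffAt ℝ k f (c • x)) :
    ‖iteratedFDeriv ℝ k (fun y => a • f (c • y)) x‖ ≤
      |a| * |c| ^ k * ‖iteratedFDeriv ℝ k f (c • x)‖ := by
  set g : E →L[ℝ] E := c • ContinuousLinearMap.id ℝ E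
  have hg : ‖g‖ ≤ |c| :=
    g.opNorm_le_bound (abs_nonneg c) fun y => by simp [g, norm_smul]
  have hfg : ContDiffAt ℝ k (f ∘ g) x := hf.comp x g.contDiff.contDiffAt
  change ‖iteratedFDeriv ℝ k (fun y => a • (f ∘ g) y) x‖ ≤ _
  rw [iteratedFDeriv_const_smul_apply' hfg, norm_smul, Real.norm_eq_abs, mul_assoc]
  gcongr
  calc ‖iteratedFDeriv ℝ k (f ∘ g) x‖ ≤ ‖iteratedFDeriv ℝ k f (g x)‖ * ‖g‖ ^ k :=
        g.norm_iteratedFDeriv_comp_right_le hf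
    _ ≤ _ := by rw [mul_comm]; gcongr; rfl

end Scaling

section NormHomogeneity

variable {H : Type*} [NormedAddCommGroup H] [InnerProductSpace ℝ H]

theorem norm_pow_mul_norm_iteratedFDeriv_norm_le (k : ℕ) {z : H} (hz : z ≠ 0) :
    ‖z‖ ^ k * ‖iteratedFDeriv ℝ k (fun w : H => ‖w‖) z‖ ≤
      ‖z‖ * ‖iteratedFDeriv ℝ k (fun w : H => ‖w‖) (‖z‖⁻¹ • z)‖ := by
  have hz₀ : 0 < ‖z‖ := norm_pos_iff.2 hz
  have homog : (fun w : H => ‖w‖) = fun w => ‖z‖ • ‖‖z‖⁻¹ • w‖ := by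
    ext w
    rw [norm_smul, smul_eq_mul, norm_inv, norm_norm, mul_inv_cancel_left₀ hz₀.ne']
  have hbound := norm_iteratedFDeriv_smul_comp_smul_le (x := z) ‖z‖ ‖z‖⁻¹ (k := k)
    (contDiffAt_norm ℝ (smul_ne_zero (inv_ne_zero hz₀.ne') hz))
  rw [← homog, abs_of_pos hz₀, abs_of_pos (inv_pos.2 hz₀), inv_pow] at hbound
  calc ‖z‖ ^ k * ‖iteratedFDeriv ℝ k (fun w : H => ‖w‖) z‖
      ≤ ‖z‖ ^ k * (‖z‖ * (‖z‖ ^ k)⁻¹ * ‖iteratedFDeriv ℝ k (fun w : H => ‖w‖) (‖z‖⁻¹ • z)‖) := by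
        gcongr
    _ = _ := by field_simp

theorem exists_norm_pow_mul_norm_iteratedFDeriv_succ_norm_le [FiniteDimensional ℝ H] (k : ℕ) :
    ∃ C, ∀ z : H, z ≠ 0 →
      ‖z‖ ^ k * ‖iteratedFDeriv ℝ (k + 1) (fun w : H => ‖w‖) z‖ ≤ C := by
  have hcont : ContinuousOn (iteratedFDeriv ℝ (k + 1) (fun w : H => ‖w‖)) (Metric.sphere 0 1) :=
    fun w hw => (contDiffAt_norm ℝ (ne_zero_of_mem_unit_sphere ⟨w, hw⟩)
      |>.continuousAt_iteratedFDeriv le_rfl).continuousWithinAt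
  obtain ⟨C, hC⟩ := (isCompact_sphere (0 : H) 1).exists_bound_of_continuousOn hcont
  refine ⟨C, fun z hz => ?_⟩
  have hz₀ : 0 < ‖z‖ := norm_pos_iff.2 hz
  have hunit : ‖z‖⁻¹ • z ∈ Metric.sphere (0 : H) 1 := by
    simp [norm_smul, hz₀.ne']
  have := norm_pow_mul_norm_iteratedFDeriv_norm_le (k + 1) hz
  rw [pow_succ', mul_assoc] at this
  exact le_of_mul_le_mul_left (this.trans (by gcongr; exact hC _ hunit)) hz₀

end NormHomogeneity

section SmoothDist

variable {E : Type*} [NormedAddCommGroup E]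

noncomputable def smoothDist (ε : ℝ) (v : E) : ℝ := √(ε ^ 2 + ‖v‖ ^ 2)

theorem smoothDist_eq_norm_toLp (ε : ℝ) (v : E) :
    smoothDist ε v = ‖WithLp.toLp 2 (ε, v)‖ := by
  simp [smoothDist, WithLp.prod_norm_eq_of_L2]

theorem contDiff_smoothDist [InnerProductSpace ℝ E] {ε : ℝ} (hε : ε ≠ 0) {n : WithTop ℕ∞} :
    ContDiff ℝ n (smoothDist (E := E) ε) :=
  (contDiff_const.add (contDiff_norm_sq ℝ)).sqrt fun v => by positivity

theorem abs_smoothDist_sub_norm_le (ε : ℝ) (v : E) : |smoothDist ε v - ‖v‖| ≤ |ε| := by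
  have hlower : ‖v‖ ≤ smoothDist ε v := Real.le_sqrt_of_sq_le (by nlinarith [sq_nonneg ε])
  have hupper : smoothDist ε v ≤ |ε| + ‖v‖ :=
    Real.sqrt_le_iff.2 ⟨by positivity, by nlinarith [sq_abs ε, abs_nonneg ε, norm_nonneg v]⟩
  rw [abs_of_nonneg (sub_nonneg.2 hlower)]
  linarith

theorem exists_pow_mul_norm_iteratedFDeriv_succ_smoothDist_le [InnerProductSpace ℝ E]
    [FiniteDimensional ℝ E] (k : ℕ) :
    ∃ C, ∀ ε > 0, ∀ v : E,
      ε ^ k * ‖iteratedFDeriv ℝ (k + 1) (smoothDist ε) v‖ ≤ C := by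
  obtain ⟨C, hC⟩ :=
    exists_norm_pow_mul_norm_iteratedFDeriv_succ_norm_le (H := WithLp 2 (ℝ × E)) k
  refine ⟨C, fun ε hε v => ?_⟩
  set L : E →L[ℝ] WithLp 2 (ℝ × E) :=
    (WithLp.prodContinuousLinearEquiv 2 ℝ ℝ E).symm.toContinuousLinearMap ∘L
      ContinuousLinearMap.inr ℝ ℝ E
  set e : WithLp 2 (ℝ × E) := WithLp.toLp 2 (ε, 0)
  have hL : ‖L‖ ≤ 1 := L.opNorm_le_bound zero_le_one fun u => by simp [L]
  have hLe : ∀ u, L u + e = WithLp.toLp 2 (ε, u) := fun u => by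
    simp [L, e, ← WithLp.toLp_add]
  have hcomp : smoothDist ε = (fun w => ‖w + e‖) ∘ L := by
    ext u
    simp [hLe, smoothDist_eq_norm_toLp]
  have hε_le : ε ≤ ‖L v + e‖ := by
    rw [hLe, ← smoothDist_eq_norm_toLp]
    exact Real.le_sqrt_of_sq_le (by nlinarith [sq_nonneg ‖v‖])
  have hne : L v + e ≠ 0 := norm_pos_iff.1 (hε.trans_le hε_le)
  have hderiv : ‖iteratedFDeriv ℝ (k + 1) (smoothDist ε) v‖ ≤
      ‖iteratedFDeriv ℝ (k + 1) (fun w : WithLp 2 (ℝ × E) => ‖w‖) (L v + e)‖ := by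
    have hsmooth : ContDiffAt ℝ (k + 1) (fun w => ‖w + e‖) (L v) :=
      (contDiffAt_id.add contDiffAt_const).norm ℝ hne
    rw [hcomp]
    refine (L.norm_iteratedFDeriv_comp_right_le hsmooth).trans ?_
    rw [iteratedFDeriv_comp_add_right]
    exact mul_le_of_le_one_right (norm_nonneg _) (pow_le_one₀ (norm_nonneg _) hL)
  calc ε ^ k * ‖iteratedFDeriv ℝ (k + 1) (smoothDist ε) v‖
      ≤ ‖L v + e‖ ^ k *
          ‖iteratedFDeriv ℝ (k + 1) (fun w : WithLp 2 (ℝ × E) => ‖w‖) (L v + e)‖ := by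
        gcongr
    _ ≤ C := hC _ hne

end SmoothDist

theorem stmt12_general (m : ℕ) :
    ∃ c : ℕ → ℝ, (∀ k, 0 < c k) ∧
      ∀ p : ℕ, 0 < p →
        ∃ d : EuclideanSpace ℝ (Fin m) × EuclideanSpace ℝ (Fin m) → ℝ,
          ContDiff ℝ (⊤ : ℕ∞) d ∧
          (∀ x y, |d (x, y) - ‖x - y‖| < 1 / Real.sqrt p) ∧
          (∀ k : ℕ, 1 ≤ k → ∀ y x,
            ‖iteratedFDeriv ℝ k (fun x' => d (x', y)) x‖ ≤
              c k * (p : ℝ) ^ (((k : ℝ) - 1) / 2)) := by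
  choose C hC using
    exists_pow_mul_norm_iteratedFDeriv_succ_smoothDist_le (E := EuclideanSpace ℝ (Fin m))
  refine ⟨fun k => max (C (k - 1) * 2 ^ (k - 1)) 1, fun k => lt_max_of_lt_right one_pos,
    fun p hp => ?_⟩
  have hsqrt : 0 < √(p : ℝ) := Real.sqrt_pos.2 (Nat.cast_pos.2 hp)
  set ε := (2 * √(p : ℝ))⁻¹
  have hε : 0 < ε := by positivity
  refine ⟨fun q => smoothDist ε (q.1 - q.2),
    (contDiff_smoothDist hε.ne').comp (contDiff_fst.sub contDiff_snd), fun x y => ?_,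
    fun k hk y x => ?_⟩
  · calc |smoothDist ε (x - y) - ‖x - y‖| ≤ |ε| := abs_smoothDist_sub_norm_le ε (x - y)
      _ < 1 / √p := by
        rw [abs_of_pos hε, one_div]
        exact inv_strictAnti₀ hsqrt (by linarith)
  · obtain ⟨j, rfl⟩ := Nat.exists_eq_add_of_le' hk
    rw [iteratedFDeriv_comp_sub]
    have hpow : (p : ℝ) ^ ((((j + 1 : ℕ) : ℝ) - 1) / 2) = √(p : ℝ) ^ j := by
      rw [Nat.cast_succ, add_sub_cancel_right, Real.rpow_div_two_eq_sqrt _ p.cast_nonneg,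
        Real.rpow_natCast]
    simp only [hpow, Nat.add_sub_cancel]
    calc ‖iteratedFDeriv ℝ (j + 1) (smoothDist ε) (x - y)‖
        ≤ (2 * √(p : ℝ)) ^ j * C j := by
          rw [← inv_mul_le_iff₀ (by positivity), ← inv_pow]
          exact hC j ε hε (x - y)
      _ = C j * 2 ^ j * √(p : ℝ) ^ j := by ring
      _ ≤ _ := by gcongr; exact le_max_left _ _

/-- Existence of a smoothed distance function `d̃_p` on `ℝ^m`:
`|d̃_p(x,y) − |x−y|| < 1/√p` and `|∂^α_x d̃_p| ≤ c_{|α|} p^{(|α|−1)/2}`, with the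
constants `c_k` independent of `p`. -/
theorem stmt12 (m : ℕ) (hm : 1 ≤ m) :
    ∃ c : ℕ → ℝ, (∀ k, 0 < c k) ∧
      ∀ p : ℕ, 0 < p →
        ∃ d : EuclideanSpace ℝ (Fin m) × EuclideanSpace ℝ (Fin m) → ℝ,
          ContDiff ℝ (⊤ : ℕ∞) d ∧
          (∀ x y, |d (x, y) - ‖x - y‖| < 1 / Real.sqrt p) ∧
          (∀ k : ℕ, 1 ≤ k → ∀ y x,
            ‖iteratedFDeriv ℝ k (fun x' => d (x', y)) x‖ ≤
              c k * (p : ℝ) ^ (((k : ℝ) - 1) / 2)) :=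
  stmt12_general m
end

section
/- Let (X, μ) be a measure space and (U_α)_{α ∈ A} a countable family of measurable subsets with ∪_α U_α = X. For each α set I_α = {β ∈ A : U_α ∩ U_β ≠ ∅}, and assume there is K₀ ∈ ℕ with #I_α ≤ K₀ for all α. Let T : L²(X, μ) → L²(X, μ) be a linear map and ε ≥ 0 such that for every α ∈ A and every f ∈ L²(X, μ): ‖Tf‖_{L²(U_α)} ≤ ε Σ_{β ∈ I_α} ‖f‖_{L²(U_β)}. Then ‖Tf‖_{L²(X)} ≤ K₀^{3/2} ε ‖f‖_{L²(X)} for every f ∈ L²(X, μ). -/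
/-!
Squaring the local bound and applying Cauchy–Schwarz to the at most `K₀` terms gives
`‖Tf‖²_{U_α} ≤ ε² K₀ Σ_{β ∈ I_α} ‖f‖²_{U_β}`. Since the `U_α` cover `X`, summing over `α`
bounds `‖Tf‖²`. On the right, the relation `β ∈ I_α` is symmetric, so each `β` is counted at
most `K₀` times, and `Σ_β ‖f‖²_{U_β} ≤ K₀ ‖f‖²` because every point lies in at most `K₀` of
the sets `U_β`. Altogether `‖Tf‖² ≤ K₀³ ε² ‖f‖²`.
-/

open MeasureTheory
open scoped Finset ENNReal

theorem ENNReal.sq_sum_le_card_mul_sum_sq {ι : Type*} (s : Finset ι) (f : ι → ℝ≥0∞) :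
    (∑ i ∈ s, f i) ^ 2 ≤ #s * ∑ i ∈ s, f i ^ 2 := by
  simpa [ENNReal.rpow_two, show (2 : ℝ) - 1 = 1 by norm_num] using
    ENNReal.rpow_sum_le_const_mul_sum_rpow s f one_le_two

theorem ENNReal.tsum_sum_le_mul_tsum_of_symm {A : Type*} {I : A → Finset A}
    (hsymm : ∀ α β, β ∈ I α → α ∈ I β) {K : ℕ} (hcard : ∀ α, #(I α) ≤ K) (a : A → ℝ≥0∞) :
    ∑' α, ∑ β ∈ I α, a β ≤ K * ∑' β, a β := by
  simp_rw [sum_eq_tsum_indicator a (I _)]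
  rw [ENNReal.tsum_comm, ← ENNReal.tsum_mul_left]
  refine ENNReal.tsum_le_tsum fun β => ?_
  calc ∑' α, (I α : Set A).indicator a β
      ≤ ∑' α, (I β : Set A).indicator (fun _ => a β) α := by
        refine ENNReal.tsum_le_tsum fun α => ?_
        by_cases hβ : β ∈ I α
        · simp [hβ, hsymm α β hβ]
        · simp [hβ]
    _ = #(I β) * a β := by simp [← sum_eq_tsum_indicator]
    _ ≤ K * a β := by gcongr; exact_mod_cast hcard β

theorem ENNReal.sq_le_mul_card_mul_sum_sq_of_le {ι : Type*} {s : Finset ι} {K : ℕ}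
    (hs : #s ≤ K) {a c : ℝ≥0∞} {b : ι → ℝ≥0∞} (h : a ≤ c * ∑ i ∈ s, b i) :
    a ^ 2 ≤ c ^ 2 * K * ∑ i ∈ s, b i ^ 2 :=
  calc a ^ 2 ≤ c ^ 2 * (∑ i ∈ s, b i) ^ 2 := by rw [← mul_pow]; gcongr
    _ ≤ c ^ 2 * (#s * ∑ i ∈ s, b i ^ 2) := by gcongr; exact sq_sum_le_card_mul_sum_sq s b
    _ ≤ c ^ 2 * K * ∑ i ∈ s, b i ^ 2 := by rw [mul_assoc]; gcongr

theorem ENNReal.le_ofReal_mul_sum_of_toReal_le {ι : Type*} {s : Finset ι} {a : ℝ≥0∞}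
    {b : ι → ℝ≥0∞} (ha : a ≠ ⊤) (hb : ∀ i ∈ s, b i ≠ ⊤) {ε : ℝ} (hε : 0 ≤ ε)
    (h : a.toReal ≤ ε * ∑ i ∈ s, (b i).toReal) : a ≤ ENNReal.ofReal ε * ∑ i ∈ s, b i := by
  have hrhs : ENNReal.ofReal ε * ∑ i ∈ s, b i ≠ ⊤ :=
    ENNReal.mul_ne_top ENNReal.ofReal_ne_top (ENNReal.sum_ne_top.2 hb)
  rwa [← ENNReal.toReal_le_toReal ha hrhs, ENNReal.toReal_mul, ENNReal.toReal_ofReal hε,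
    ENNReal.toReal_sum hb]

theorem Set.encard_setOf_mem_le_of_iUnion_eq_univ {X A : Type*} {U : A → Set X}
    (hcover : ⋃ α, U α = Set.univ) {I : A → Finset A}
    (hI : ∀ α β, (U α ∩ U β).Nonempty → β ∈ I α) {K : ℕ} (hcard : ∀ α, #(I α) ≤ K) (x : X) :
    {α | x ∈ U α}.encard ≤ K := by
  obtain ⟨β, hxβ⟩ := Set.mem_iUnion.1 (hcover ▸ Set.mem_univ x)
  calc {α | x ∈ U α}.encard ≤ (I β : Set A).encard :=
        Set.encard_le_encard fun α hxα => hI β α ⟨x, hxβ, hxα⟩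
    _ = #(I β) := Set.encard_coe_eq_coe_finsetCard _
    _ ≤ K := by exact_mod_cast hcard β

namespace MeasureTheory

variable {X E F : Type*} [MeasurableSpace X] [NormedAddCommGroup E] [NormedAddCommGroup F]

theorem tsum_setLIntegral_le_mul_lintegral {A : Type*} [Countable A]
    {μ : Measure X} {U : A → Set X} (hU : ∀ α, MeasurableSet (U α)) {K : ℕ}
    (hmult : ∀ x, {α | x ∈ U α}.encard ≤ K) {g : X → ℝ≥0∞} (hg : AEMeasurable g μ) :
    ∑' α, ∫⁻ x in U α, g x ∂μ ≤ K * ∫⁻ x, g x ∂μ := by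
  have hpoint : ∀ x, ∑' α, (U α).indicator g x ≤ K * g x := fun x =>
    calc ∑' α, (U α).indicator g x = ∑' α, {α | x ∈ U α}.indicator (fun _ => g x) α := by
          congr 1 with α
      _ = {α | x ∈ U α}.encard * g x := by rw [← tsum_subtype, ENNReal.tsum_set_const]
      _ ≤ K * g x := by gcongr; exact_mod_cast hmult x
  calc ∑' α, ∫⁻ x in U α, g x ∂μ = ∫⁻ x, ∑' α, (U α).indicator g x ∂μ := by
        simp_rw [← lintegral_indicator (hU _)]
        exact (lintegral_tsum fun α => hg.indicator (hU α)).symm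
    _ ≤ ∫⁻ x, K * g x ∂μ := lintegral_mono hpoint
    _ = K * ∫⁻ x, g x ∂μ := lintegral_const_mul' _ _ (ENNReal.natCast_ne_top K)

theorem sq_eLpNorm_two (f : X → E) (μ : Measure X) :
    eLpNorm f 2 μ ^ 2 = ∫⁻ x, ‖f x‖ₑ ^ 2 ∂μ := by
  simpa using eLpNorm_nnreal_pow_eq_lintegral (f := f) (μ := μ) (p := 2) two_ne_zero

theorem MemLp.sqrt_integral_norm_sq {μ : Measure X} {f : X → E} (hf : MemLp f 2 μ) :
    Real.sqrt (∫ x, ‖f x‖ ^ 2 ∂μ) = (eLpNorm f 2 μ).toReal := by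
  rw [hf.eLpNorm_eq_integral_rpow_norm two_ne_zero ENNReal.ofNat_ne_top,
    ENNReal.toReal_ofReal (by positivity)]
  norm_num [Real.sqrt_eq_rpow, Real.rpow_two]

theorem sq_eLpNorm_two_le_of_local_bound {A : Type*} [Countable A] {μ : Measure X}
    {U : A → Set X} (hU : ∀ α, MeasurableSet (U α)) (hcover : ⋃ α, U α = Set.univ)
    {I : A → Finset A} (hI : ∀ α β, β ∈ I α ↔ (U α ∩ U β).Nonempty) {K : ℕ}
    (hcard : ∀ α, #(I α) ≤ K) {f : X → E} (hf : AEStronglyMeasurable f μ) {g : X → F}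
    {c : ℝ≥0∞}
    (hloc : ∀ α, eLpNorm g 2 (μ.restrict (U α)) ≤ c * ∑ β ∈ I α, eLpNorm f 2 (μ.restrict (U β))) :
    eLpNorm g 2 μ ^ 2 ≤ K ^ 3 * c ^ 2 * eLpNorm f 2 μ ^ 2 := by
  have hsymm : ∀ α β, β ∈ I α → α ∈ I β := fun α β h =>
    (hI β α).2 (Set.inter_comm (U α) (U β) ▸ (hI α β).1 h)
  have hmult := Set.encard_setOf_mem_le_of_iUnion_eq_univ hcover (fun α β => (hI α β).2) hcard
  calc eLpNorm g 2 μ ^ 2 ≤ ∑' α, eLpNorm g 2 (μ.restrict (U α)) ^ 2 := by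
        simpa only [sq_eLpNorm_two, hcover, Measure.restrict_univ]
          using lintegral_iUnion_le U fun x => ‖g x‖ₑ ^ 2
    _ ≤ ∑' α, c ^ 2 * K * ∑ β ∈ I α, eLpNorm f 2 (μ.restrict (U β)) ^ 2 :=
        ENNReal.tsum_le_tsum fun α => ENNReal.sq_le_mul_card_mul_sum_sq_of_le (hcard α) (hloc α)
    _ = c ^ 2 * K * ∑' α, ∑ β ∈ I α, eLpNorm f 2 (μ.restrict (U β)) ^ 2 := ENNReal.tsum_mul_left
    _ ≤ c ^ 2 * K * (K * ∑' β, eLpNorm f 2 (μ.restrict (U β)) ^ 2) := by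
        gcongr
        exact ENNReal.tsum_sum_le_mul_tsum_of_symm hsymm hcard _
    _ ≤ c ^ 2 * K * (K * (K * eLpNorm f 2 μ ^ 2)) := by
        gcongr
        simpa only [sq_eLpNorm_two]
          using tsum_setLIntegral_le_mul_lintegral hU hmult (hf.enorm.pow_const 2)
    _ = K ^ 3 * c ^ 2 * eLpNorm f 2 μ ^ 2 := by ring

end MeasureTheory

/-- Patching estimate: if a linear map `T` on `L²(X,μ)` satisfies local bounds
`‖Tf‖_{L²(U_α)} ≤ ε Σ_{β ∈ I_α} ‖f‖_{L²(U_β)}` over a countable cover of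
intersection multiplicity at most `K₀`, then `‖Tf‖_{L²} ≤ K₀^{3/2} ε ‖f‖_{L²}`. -/
theorem stmt14 {X : Type*} [MeasurableSpace X] (μ : Measure X)
    {A : Type*} [Countable A] (U : A → Set X)
    (hUmeas : ∀ α, MeasurableSet (U α))
    (hUcover : (⋃ α, U α) = Set.univ)
    (K₀ : ℕ)
    (hfin : ∀ α : A, {β : A | (U α ∩ U β).Nonempty}.Finite)
    (hcard : ∀ α : A, (hfin α).toFinset.card ≤ K₀)
    (T : Lp ℂ 2 μ →ₗ[ℂ] Lp ℂ 2 μ) (ε : ℝ) (hε : 0 ≤ ε)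
    (hloc : ∀ (α : A) (f : Lp ℂ 2 μ),
      Real.sqrt (∫ x in U α, ‖(T f : Lp ℂ 2 μ) x‖ ^ 2 ∂μ) ≤
        ε * ∑ β ∈ (hfin α).toFinset, Real.sqrt (∫ x in U β, ‖f x‖ ^ 2 ∂μ)) :
    ∀ f : Lp ℂ 2 μ,
      Real.sqrt (∫ x, ‖(T f : Lp ℂ 2 μ) x‖ ^ 2 ∂μ) ≤
        (K₀ : ℝ) ^ ((3 : ℝ) / 2) * ε * Real.sqrt (∫ x, ‖f x‖ ^ 2 ∂μ) := by
  intro f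
  have hsqrt (h : Lp ℂ 2 μ) (s : Set X) :
      Real.sqrt (∫ x in s, ‖h x‖ ^ 2 ∂μ) = (eLpNorm h 2 (μ.restrict s)).toReal :=
    ((Lp.memLp h).restrict s).sqrt_integral_norm_sq
  have hfinite (h : Lp ℂ 2 μ) (s : Set X) : eLpNorm h 2 (μ.restrict s) ≠ ⊤ :=
    ((Lp.memLp h).restrict s).eLpNorm_ne_top
  have hlocal (α : A) : eLpNorm (T f) 2 (μ.restrict (U α)) ≤
      ENNReal.ofReal ε * ∑ β ∈ (hfin α).toFinset, eLpNorm f 2 (μ.restrict (U β)) := by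
    refine ENNReal.le_ofReal_mul_sum_of_toReal_le (hfinite _ _) (fun β _ => hfinite _ _) hε ?_
    simpa only [hsqrt] using hloc α f
  have hsq := sq_eLpNorm_two_le_of_local_bound hUmeas hUcover
    (fun α β => Set.Finite.mem_toFinset (hfin α)) hcard (Lp.aestronglyMeasurable f) hlocal
  have hsq_real :
      (eLpNorm (T f) 2 μ).toReal ^ 2 ≤ K₀ ^ 3 * ε ^ 2 * (eLpNorm f 2 μ).toReal ^ 2 := by
    simpa [ENNReal.toReal_mul, ENNReal.toReal_ofReal hε] using
      ENNReal.toReal_mono (by finiteness [Lp.eLpNorm_ne_top f]) hsq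
  rw [(Lp.memLp _).sqrt_integral_norm_sq, (Lp.memLp f).sqrt_integral_norm_sq]
  refine (pow_le_pow_iff_left₀ ENNReal.toReal_nonneg (by positivity) two_ne_zero).1 ?_
  calc (eLpNorm (T f) 2 μ).toReal ^ 2 ≤ K₀ ^ 3 * ε ^ 2 * (eLpNorm f 2 μ).toReal ^ 2 := hsq_real
    _ = ((K₀ : ℝ) ^ ((3 : ℝ) / 2) * ε * (eLpNorm f 2 μ).toReal) ^ 2 := by
      rw [mul_pow, mul_pow, ← Real.rpow_mul_natCast (Nat.cast_nonneg K₀)]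
      norm_num
end

section
/- For all polynomials K_1, K_2 : ℝ^{2n} × ℝ^{2n} → ℂ, the integral ∫_{ℝ^{2n}} K_1(Z, W) 𝒫(Z, W) K_2(W, Z') 𝒫(W, Z') dW converges absolutely for all Z, Z' ∈ ℝ^{2n}, and there exists a polynomial K_3 : ℝ^{2n} × ℝ^{2n} → ℂ with deg K_3 ≤ deg K_1 + deg K_2 such that ∫_{ℝ^{2n}} K_1(Z, W) 𝒫(Z, W) K_2(W, Z') 𝒫(W, Z') dW = K_3(Z, Z') 𝒫(Z, Z') for all Z, Z'. (Hence the set of kernels of the form K(Z,Z')𝒫(Z,Z') with K polynomial is a filtered algebra under composition of integral operators.) -/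
open MeasureTheory

noncomputable section

/-- The complex coordinate `z_k = Z_{2k−1} + i Z_{2k}` (1-based indexing). -/
def zc {n : ℕ} (Z : Fin (2*n) → ℝ) (k : Fin n) : ℂ :=
  Complex.ofReal (Z ⟨2 * k.val, by have := k.isLt; omega⟩) +
    Complex.I * Complex.ofReal (Z ⟨2 * k.val + 1, by have := k.isLt; omega⟩)

/-- The Bergman kernel
`𝒫(Z,Z') = (2π)^{-n} (Π_j a_j) exp(−(1/4) Σ_k a_k (|z_k|² + |z'_k|² − 2 z_k conj z'_k))`. -/
def berg {n : ℕ} (a : Fin n → ℝ) (Z Z' : Fin (2*n) → ℝ) : ℂ :=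
  (((2 * Real.pi) ^ n : ℝ) : ℂ)⁻¹ * (∏ j, ((a j : ℝ) : ℂ)) *
    Complex.exp (-(1/4 : ℂ) * ∑ k, ((a k : ℝ) : ℂ) *
      (((Complex.normSq (zc Z k) : ℝ) : ℂ) + ((Complex.normSq (zc Z' k) : ℝ) : ℂ) -
        2 * zc Z k * (starRingEnd ℂ) (zc Z' k)))

/-- Evaluation of a polynomial in the `4n` real variables `(Z, Z')` (with complex
coefficients) at a pair of points of `ℝ^{2n}`. -/
def evalP {n : ℕ} (K : MvPolynomial (Fin (2*n) ⊕ Fin (2*n)) ℂ)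
    (Z Z' : Fin (2*n) → ℝ) : ℂ :=
  MvPolynomial.eval (Sum.elim (fun j => ((Z j : ℝ) : ℂ)) (fun j => ((Z' j : ℝ) : ℂ))) K

/-!
Completing the square in `W` gives the reproducing identity
`𝒫(Z,W) 𝒫(W,Z') = 𝒫(Z,Z') ∏ⱼ gⱼ(Wⱼ) / ∫ gⱼ` with one-dimensional Gaussians
`gⱼ(u) = exp(-αⱼ u² + βⱼ u)`, where `αⱼ = a_k / 2` and `βⱼ` is linear in `(Z, Z')`.
For monomials `K₁, K₂` the integral therefore factors into one-dimensional Gaussian moments, and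
integration by parts gives `∫ uᵖ g = (∫ g) Qₚ(β)` with `deg Qₚ ≤ p`. Substituting the linear
forms `βⱼ(Z, Z')` into the `Qₚ` produces `K₃`; general `K₁, K₂` follow by bilinearity.
-/
open Complex ComplexConjugate Filter

section GaussianMoments

open Polynomial

def gaussWeight (α : ℝ) (β : ℂ) (u : ℝ) : ℂ := cexp (-α * u ^ 2 + β * u)

/-- The recursion is the integration by parts `2α I_{p+1} = β I_p + p I_{p-1}` for the moments
`I_p = ∫ uᵖ gaussWeight α β u`. -/
def gaussMomentPoly (α : ℝ) : ℕ → ℂ[X]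
  | 0 => 1
  | 1 => C (2 * α : ℂ)⁻¹ * X
  | p + 2 => C (2 * α : ℂ)⁻¹ *
      (X * gaussMomentPoly α (p + 1) + C (p + 1 : ℂ) * gaussMomentPoly α p)

lemma natDegree_gaussMomentPoly_le (α : ℝ) (p : ℕ) : (gaussMomentPoly α p).natDegree ≤ p := by
  induction p using Nat.twoStepInduction with
  | zero => simp [gaussMomentPoly]
  | one =>
    rw [gaussMomentPoly]
    exact natDegree_C_mul_le _ _ |>.trans natDegree_X_le
  | more p h₀ h₁ =>
    rw [gaussMomentPoly]
    refine (natDegree_C_mul_le _ _).trans (natDegree_add_le_of_degree_le ?_ ?_)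
    · exact natDegree_mul_le.trans (by linarith [natDegree_X_le (R := ℂ)])
    · exact (natDegree_C_mul_le _ _).trans (by omega)

lemma norm_gaussWeight (α : ℝ) (β : ℂ) (u : ℝ) :
    ‖gaussWeight α β u‖ = Real.exp (-α * u ^ 2 + β.re * u) := by
  rw [gaussWeight, norm_exp]
  congr 1
  simp [← ofReal_pow]

lemma norm_gaussWeight_le {α : ℝ} (hα : 0 < α) (β : ℂ) (u : ℝ) :
    ‖gaussWeight α β u‖ ≤ Real.exp (β.re ^ 2 / (4 * α)) := by
  rw [norm_gaussWeight, Real.exp_le_exp, le_div_iff₀ (by positivity)]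
  nlinarith [sq_nonneg (2 * α * u - β.re)]

lemma continuous_gaussWeight (α : ℝ) (β : ℂ) : Continuous (gaussWeight α β) := by
  unfold gaussWeight; fun_prop

lemma integrable_pow_mul_gaussWeight {α : ℝ} (hα : 0 < α) (β : ℂ) (p : ℕ) :
    Integrable (fun u : ℝ => (u : ℂ) ^ p * gaussWeight α β u) := by
  have hmoment : Integrable (fun u : ℝ => ((u ^ p * Real.exp (-(α / 2) * u ^ 2) : ℝ) : ℂ)) := by
    have := integrable_rpow_mul_exp_neg_mul_sq (half_pos hα) (s := p)
      (by linarith [p.cast_nonneg (α := ℝ)])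
    simp only [Real.rpow_natCast] at this
    exact this.ofReal
  -- split the Gaussian in two halves: one tames the moment, the other stays bounded
  refine (hmoment.mul_bdd (continuous_gaussWeight (α / 2) β).aestronglyMeasurable
    (Eventually.of_forall (norm_gaussWeight_le (half_pos hα) β))).congr
    (Eventually.of_forall fun u => ?_)
  simp only [gaussWeight, ofReal_mul, ofReal_pow, ofReal_exp, mul_assoc, ← Complex.exp_add]
  congr 2
  push_cast
  ring

lemma hasDerivAt_pow_mul_gaussWeight (α : ℝ) (β : ℂ) (q : ℕ) (u : ℝ) :
    HasDerivAt (fun u : ℝ => (u : ℂ) ^ q * gaussWeight α β u)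
      (q * ((u : ℂ) ^ (q - 1) * gaussWeight α β u) + β * ((u : ℂ) ^ q * gaussWeight α β u)
        - 2 * α * ((u : ℂ) ^ (q + 1) * gaussWeight α β u)) u := by
  have hexp : HasDerivAt (fun z : ℂ => -α * z ^ 2 + β * z) (-α * (2 * (u : ℂ) ^ 1) + β * 1) u :=
    ((hasDerivAt_pow 2 _).const_mul _).add ((hasDerivAt_id _).const_mul β)
  have := ((hasDerivAt_pow q (u : ℂ)).mul hexp.cexp).comp_ofReal
  refine this.congr_deriv ?_
  simp only [gaussWeight]
  rcases q with _ | q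
  · simp only [CharP.cast_eq_zero, zero_tsub, pow_zero, mul_one, neg_mul, zero_mul, pow_one,
      one_mul, zero_add]
    ring
  · simp only [Nat.add_sub_cancel, pow_succ]; push_cast; ring

-- At `q = 0` the truncated `q - 1` is harmless: its coefficient `q` vanishes.
lemma integral_pow_mul_gaussWeight_succ {α : ℝ} (hα : 0 < α) (β : ℂ) (q : ℕ) :
    2 * α * ∫ u : ℝ, (u : ℂ) ^ (q + 1) * gaussWeight α β u
      = β * (∫ u : ℝ, (u : ℂ) ^ q * gaussWeight α β u)
        + q * ∫ u : ℝ, (u : ℂ) ^ (q - 1) * gaussWeight α β u := by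
  have hI := integrable_pow_mul_gaussWeight hα β
  have h := integral_eq_zero_of_hasDerivAt_of_integrable
    (hasDerivAt_pow_mul_gaussWeight α β q)
    ((((hI _).const_mul _).add ((hI _).const_mul _)).sub ((hI _).const_mul _)) (hI q)
  rw [integral_sub, integral_add, integral_const_mul, integral_const_mul,
    integral_const_mul] at h
  · linear_combination -h
  all_goals first
    | exact (hI _).const_mul _
    | exact ((hI _).const_mul _).add ((hI _).const_mul _)

lemma integral_pow_mul_gaussWeight {α : ℝ} (hα : 0 < α) (β : ℂ) (p : ℕ) :
    ∫ u : ℝ, (u : ℂ) ^ p * gaussWeight α β u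
      = (∫ u : ℝ, gaussWeight α β u) * (gaussMomentPoly α p).eval β := by
  have h2α : (2 * α : ℂ) ≠ 0 := by exact_mod_cast (mul_pos two_pos hα).ne'
  induction p using Nat.twoStepInduction with
  | zero => simp [gaussMomentPoly]
  | one =>
    have h := integral_pow_mul_gaussWeight_succ hα β 0
    simp only [pow_zero, one_mul, zero_add, CharP.cast_eq_zero, zero_mul, add_zero] at h
    simp only [gaussMomentPoly, eval_mul, eval_C, eval_X]
    apply mul_left_cancel₀ h2α
    linear_combination h - β * (∫ u : ℝ, gaussWeight α β u) * mul_inv_cancel₀ h2α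
  | more p h₀ h₁ =>
    have h := integral_pow_mul_gaussWeight_succ hα β (p + 1)
    simp only [Nat.add_sub_cancel, h₀, h₁] at h
    simp only [gaussMomentPoly, eval_mul, eval_C, eval_X,
      eval_add]
    apply mul_left_cancel₀ h2α
    push_cast at h ⊢
    linear_combination h - (∫ u : ℝ, gaussWeight α β u) * (β * (gaussMomentPoly α (p + 1)).eval β
      + (p + 1) * (gaussMomentPoly α p).eval β) * mul_inv_cancel₀ h2α

lemma integral_gaussWeight {α : ℝ} (hα : 0 < α) (β : ℂ) :
    ∫ u : ℝ, gaussWeight α β u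
      = ((Real.pi / α : ℝ) : ℂ) ^ (1 / 2 : ℂ) * cexp (β ^ 2 / (4 * α)) := by
  have h := integral_cexp_quadratic (b := -α) (by simpa using hα) β 0
  simp only [add_zero, neg_neg, zero_sub] at h
  simp only [gaussWeight, h]
  congr 2
  · push_cast; ring
  · field_simp

end GaussianMoments

section ProductGaussian

variable {ι : Type*} [Fintype ι] {α : ι → ℝ} (hα : ∀ i, 0 < α i) (β : ι → ℂ) (e : ι → ℕ)
include hα

lemma integrable_prod_pow_mul_gaussWeight :
    Integrable (fun W : ι → ℝ => ∏ i, (W i : ℂ) ^ e i * gaussWeight (α i) (β i) (W i)) :=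
  Integrable.fintype_prod (f := fun i (u : ℝ) => (u : ℂ) ^ e i * gaussWeight (α i) (β i) u)
    fun i => integrable_pow_mul_gaussWeight (hα i) _ _

lemma integral_prod_pow_mul_gaussWeight :
    ∫ W : ι → ℝ, ∏ i, (W i : ℂ) ^ e i * gaussWeight (α i) (β i) (W i)
      = ∏ i, (∫ u : ℝ, gaussWeight (α i) (β i) u) * (gaussMomentPoly (α i) (e i)).eval (β i) := by
  rw [integral_fintype_prod_volume_eq_prod
    (f := fun i (u : ℝ) => (u : ℂ) ^ e i * gaussWeight (α i) (β i) u)]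
  exact Finset.prod_congr rfl fun i _ => integral_pow_mul_gaussWeight (hα i) _ _

end ProductGaussian

section Coordinates

variable {n : ℕ}

def reIdx (k : Fin n) : Fin (2 * n) := ⟨2 * k, by omega⟩
def imIdx (k : Fin n) : Fin (2 * n) := ⟨2 * k + 1, by omega⟩
def pairIdx (j : Fin (2 * n)) : Fin n := ⟨j / 2, by omega⟩

lemma zc_eq (Z : Fin (2 * n) → ℝ) (k : Fin n) : zc Z k = Z (reIdx k) + I * Z (imIdx k) := rfl

@[simp] lemma pairIdx_reIdx (k : Fin n) : pairIdx (reIdx k) = k := by ext; simp [pairIdx, reIdx]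
@[simp] lemma pairIdx_imIdx (k : Fin n) : pairIdx (imIdx k) = k := by
  ext; simp [pairIdx, imIdx]; omega

lemma prod_eq_prod_reIdx_mul_imIdx {M : Type*} [CommMonoid M] (g : Fin (2 * n) → M) :
    ∏ j, g j = ∏ k, g (reIdx k) * g (imIdx k) := by
  rw [← (finProdFinEquiv.trans (finCongr (Nat.mul_comm n 2))).prod_comp, Fintype.prod_prod_type]
  refine Finset.prod_congr rfl fun k _ => ?_
  rw [Fin.prod_univ_two]
  congr 2
  · ext; simp [reIdx, finProdFinEquiv]
  · ext; simp [imIdx, finProdFinEquiv, add_comm, mul_comm]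

end Coordinates

section Bergman

open MvPolynomial

variable {n : ℕ}

/-- The coefficient `βⱼ` of `Wⱼ` in the exponent of `𝒫(Z,W) 𝒫(W,Z')`, as a linear polynomial
in `(Z, Z')`. -/
def shiftPoly (a : Fin n → ℝ) (j : Fin (2 * n)) : MvPolynomial (Fin (2 * n) ⊕ Fin (2 * n)) ℂ :=
  let k := pairIdx j
  let z : MvPolynomial _ ℂ := X (Sum.inl (reIdx k)) + I • X (Sum.inl (imIdx k))
  let zbar' : MvPolynomial _ ℂ := X (Sum.inr (reIdx k)) - I • X (Sum.inr (imIdx k))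
  if (j : ℕ) % 2 = 0 then (a k / 2 : ℂ) • (z + zbar') else (a k / 2 * I : ℂ) • (zbar' - z)

lemma totalDegree_shiftPoly_le (a : Fin n → ℝ) (j : Fin (2 * n)) :
    (shiftPoly a j).totalDegree ≤ 1 := by
  have hX (s : Fin (2 * n) ⊕ Fin (2 * n)) : (X s : MvPolynomial _ ℂ) ∈ restrictTotalDegree _ ℂ 1 :=
    (mem_restrictTotalDegree _ _ _).2 (totalDegree_X s).le
  have hz := add_mem (hX (Sum.inl (reIdx (pairIdx j))))
    (Submodule.smul_mem _ I (hX (Sum.inl (imIdx (pairIdx j)))))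
  have hz' := sub_mem (hX (Sum.inr (reIdx (pairIdx j))))
    (Submodule.smul_mem _ I (hX (Sum.inr (imIdx (pairIdx j)))))
  rw [← mem_restrictTotalDegree]
  unfold shiftPoly
  split_ifs
  · exact Submodule.smul_mem _ _ (add_mem hz hz')
  · exact Submodule.smul_mem _ _ (sub_mem hz' hz)

lemma evalP_shiftPoly_reIdx (a : Fin n → ℝ) (Z Z' : Fin (2 * n) → ℝ) (k : Fin n) :
    evalP (shiftPoly a (reIdx k)) Z Z' = a k / 2 * (zc Z k + conj (zc Z' k)) := by
  have hpar : (reIdx k : ℕ) % 2 = 0 := by simp [reIdx]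
  simp only [shiftPoly, pairIdx_reIdx, hpar, if_true, evalP, smul_eval, map_add, map_sub,
    eval_X, Sum.elim_inl, Sum.elim_inr, zc_eq, map_mul, conj_ofReal, conj_I]
  ring

lemma evalP_shiftPoly_imIdx (a : Fin n → ℝ) (Z Z' : Fin (2 * n) → ℝ) (k : Fin n) :
    evalP (shiftPoly a (imIdx k)) Z Z' = a k / 2 * I * (conj (zc Z' k) - zc Z k) := by
  have hpar : (imIdx k : ℕ) % 2 ≠ 0 := by simp only [imIdx]; omega
  simp only [shiftPoly, pairIdx_imIdx, hpar, if_false, evalP, smul_eval, map_add, map_sub,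
    eval_X, Sum.elim_inl, Sum.elim_inr, zc_eq, map_mul, conj_ofReal, conj_I]
  ring

def bergFactor (a : ℝ) (z w : ℂ) : ℂ :=
  a / (2 * Real.pi) * cexp (-(1 / 4 : ℂ) * (a * (normSq z + normSq w - 2 * z * conj w)))

lemma berg_eq_prod (a : Fin n → ℝ) (Z Z' : Fin (2 * n) → ℝ) :
    berg a Z Z' = ∏ k, bergFactor (a k) (zc Z k) (zc Z' k) := by
  simp only [berg, bergFactor, Finset.prod_mul_distrib, ← Complex.exp_sum, Finset.mul_sum]
  congr 1
  rw [Finset.prod_div_distrib, Finset.prod_const, Finset.card_univ, Fintype.card_fin]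
  push_cast
  ring

lemma bergFactor_mul_bergFactor {a : ℝ} (ha : 0 < a) (z z' : ℂ) (x y : ℝ) :
    bergFactor a z (x + I * y) * bergFactor a (x + I * y) z'
        * ((∫ u, gaussWeight (a / 2) (a / 2 * (z + conj z')) u)
          * ∫ u, gaussWeight (a / 2) (a / 2 * I * (conj z' - z)) u)
      = bergFactor a z z'
        * (gaussWeight (a / 2) (a / 2 * (z + conj z')) x
          * gaussWeight (a / 2) (a / 2 * I * (conj z' - z)) y) := by
  have ha' : (a : ℂ) ≠ 0 := by exact_mod_cast ha.ne'
  have hsqrt : ((Real.pi / (a / 2) : ℝ) : ℂ) ^ (1 / 2 : ℂ)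
      * ((Real.pi / (a / 2) : ℝ) : ℂ) ^ (1 / 2 : ℂ) = 2 * Real.pi / a := by
    rw [← cpow_add _ _ (by exact_mod_cast (div_pos Real.pi_pos (half_pos ha)).ne')]
    norm_num
    ring
  -- completing the square in `w = x + I y`
  have hexp : -(1 / 4 : ℂ) * (a * (normSq z + normSq (x + I * y) - 2 * z * conj (x + I * y)))
      + -(1 / 4 : ℂ) * (a * (normSq (x + I * y) + normSq z' - 2 * (x + I * y) * conj z'))
      + (a / 2 * (z + conj z')) ^ 2 / (4 * (a / 2 : ℝ))
      + (a / 2 * I * (conj z' - z)) ^ 2 / (4 * (a / 2 : ℝ))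
      = -(1 / 4 : ℂ) * (a * (normSq z + normSq z' - 2 * z * conj z'))
        + (-(a / 2 : ℝ) * (x : ℂ) ^ 2 + a / 2 * (z + conj z') * x)
        + (-(a / 2 : ℝ) * (y : ℂ) ^ 2 + a / 2 * I * (conj z' - z) * y) := by
    simp only [← mul_conj, map_add, map_mul, conj_ofReal, conj_I]
    push_cast
    field_simp
    linear_combination (z ^ 2 + conj z' ^ 2 + 4 * y ^ 2 - 2 * z * conj z') * I_sq
  rw [integral_gaussWeight (half_pos ha), integral_gaussWeight (half_pos ha)]
  set w : ℂ := x + I * y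
  set S := ((Real.pi / (a / 2) : ℝ) : ℂ) ^ (1 / 2 : ℂ)
  set β₀ := a / 2 * (z + conj z')
  set β₁ := a / 2 * I * (conj z' - z)
  calc _ = a / (2 * Real.pi) * (a / (2 * Real.pi) * (S * S))
        * cexp (-(1 / 4 : ℂ) * (a * (normSq z + normSq w - 2 * z * conj w))
          + -(1 / 4 : ℂ) * (a * (normSq w + normSq z' - 2 * w * conj z'))
          + β₀ ^ 2 / (4 * (a / 2 : ℝ)) + β₁ ^ 2 / (4 * (a / 2 : ℝ))) := by
        simp only [bergFactor, exp_add]; ring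
    _ = a / (2 * Real.pi) * cexp (-(1 / 4 : ℂ) * (a * (normSq z + normSq z' - 2 * z * conj z'))
          + (-(a / 2 : ℝ) * (x : ℂ) ^ 2 + β₀ * x) + (-(a / 2 : ℝ) * (y : ℂ) ^ 2 + β₁ * y)) := by
        rw [hsqrt, hexp]
        field_simp
    _ = _ := by simp only [bergFactor, gaussWeight, exp_add]; ring

theorem berg_mul_berg {a : Fin n → ℝ} (ha : ∀ k, 0 < a k) (Z Z' W : Fin (2 * n) → ℝ) :
    berg a Z W * berg a W Z'
        * ∏ j, ∫ u, gaussWeight (a (pairIdx j) / 2) (evalP (shiftPoly a j) Z Z') u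
      = berg a Z Z' * ∏ j, gaussWeight (a (pairIdx j) / 2) (evalP (shiftPoly a j) Z Z') (W j) := by
  rw [prod_eq_prod_reIdx_mul_imIdx, prod_eq_prod_reIdx_mul_imIdx]
  simp only [pairIdx_reIdx, pairIdx_imIdx, evalP_shiftPoly_reIdx, evalP_shiftPoly_imIdx,
    berg_eq_prod, ← Finset.prod_mul_distrib]
  exact Finset.prod_congr rfl fun k _ => bergFactor_mul_bergFactor (ha k) _ _ _ _

end Bergman

section Composition

open MvPolynomial

variable {n : ℕ}

lemma totalDegree_aeval_le {σ R : Type*} [CommRing R] (b : MvPolynomial σ R) (q : Polynomial R) :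
    (Polynomial.aeval b q).totalDegree ≤ q.natDegree * b.totalDegree := by
  rw [Polynomial.aeval_eq_sum_range]
  refine (totalDegree_finsetSum _ _).trans (Finset.sup_le fun i hi => ?_)
  refine (totalDegree_smul_le _ _).trans ((totalDegree_pow _ _).trans ?_)
  exact Nat.mul_le_mul_right _ (Nat.lt_succ_iff.mp (Finset.mem_range.mp hi))

lemma evalP_monomial (m : (Fin (2 * n) ⊕ Fin (2 * n)) →₀ ℕ) (c : ℂ) (Z W : Fin (2 * n) → ℝ) :
    evalP (monomial m c) Z W
      = c * (∏ j, (Z j : ℂ) ^ m (Sum.inl j)) * ∏ j, (W j : ℂ) ^ m (Sum.inr j) := by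
  rw [evalP, eval_monomial, Finsupp.prod_fintype _ _ (fun _ => pow_zero _), Fintype.prod_sum_type]
  simp only [Sum.elim_inl, Sum.elim_inr]
  ring

def composedMonomial (a : Fin n → ℝ) (m₁ m₂ : (Fin (2 * n) ⊕ Fin (2 * n)) →₀ ℕ) (c : ℂ) :
    MvPolynomial (Fin (2 * n) ⊕ Fin (2 * n)) ℂ :=
  C c * (∏ j, X (Sum.inl j) ^ m₁ (Sum.inl j)) * (∏ j, X (Sum.inr j) ^ m₂ (Sum.inr j))
    * ∏ j, Polynomial.aeval (shiftPoly a j)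
        (gaussMomentPoly (a (pairIdx j) / 2) (m₁ (Sum.inr j) + m₂ (Sum.inl j)))

lemma evalP_composedMonomial (a : Fin n → ℝ) (m₁ m₂ : (Fin (2 * n) ⊕ Fin (2 * n)) →₀ ℕ) (c : ℂ)
    (Z Z' : Fin (2 * n) → ℝ) :
    evalP (composedMonomial a m₁ m₂ c) Z Z'
      = c * (∏ j, (Z j : ℂ) ^ m₁ (Sum.inl j)) * (∏ j, (Z' j : ℂ) ^ m₂ (Sum.inr j))
        * ∏ j, (gaussMomentPoly (a (pairIdx j) / 2) (m₁ (Sum.inr j) + m₂ (Sum.inl j))).eval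
            (evalP (shiftPoly a j) Z Z') := by
  have hcomp (b : MvPolynomial (Fin (2 * n) ⊕ Fin (2 * n)) ℂ) (q : Polynomial ℂ) :
      eval (Sum.elim (fun j => (Z j : ℂ)) fun j => (Z' j : ℂ)) (Polynomial.aeval b q)
        = q.eval (evalP b Z Z') := by
    simpa [evalP, coe_aeval_eq_eval, Polynomial.coe_aeval_eq_eval] using
      (Polynomial.aeval_algHom_apply
        (aeval (Sum.elim (fun j => (Z j : ℂ)) fun j => (Z' j : ℂ))) b q).symm
  rw [evalP]
  simp only [composedMonomial, map_mul, map_prod, map_pow, eval_C, eval_X, Sum.elim_inl,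
    Sum.elim_inr, hcomp]

lemma totalDegree_composedMonomial_le (a : Fin n → ℝ) (m₁ m₂ : (Fin (2 * n) ⊕ Fin (2 * n)) →₀ ℕ)
    (c : ℂ) : (composedMonomial a m₁ m₂ c).totalDegree ≤ m₁.degree + m₂.degree := by
  have hXpow (s : Fin (2 * n) ⊕ Fin (2 * n)) (k : ℕ) :
      (X s ^ k : MvPolynomial _ ℂ).totalDegree ≤ k :=
    (totalDegree_X_pow s k).le
  have hmoment (j : Fin (2 * n)) (p : ℕ) :
      (Polynomial.aeval (shiftPoly a j) (gaussMomentPoly (a (pairIdx j) / 2) p)).totalDegree ≤ p :=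
    (totalDegree_aeval_le _ _).trans <| by
      nlinarith [natDegree_gaussMomentPoly_le (a (pairIdx j) / 2) p, totalDegree_shiftPoly_le a j]
  have hprod {f : Fin (2 * n) → MvPolynomial (Fin (2 * n) ⊕ Fin (2 * n)) ℂ} {d : Fin (2 * n) → ℕ}
      (h : ∀ j, (f j).totalDegree ≤ d j) : (∏ j, f j).totalDegree ≤ ∑ j, d j :=
    (totalDegree_finsetProd _ _).trans (Finset.sum_le_sum fun j _ => h j)
  calc _ ≤ (∑ j, m₁ (Sum.inl j) + ∑ j, m₂ (Sum.inr j))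
        + ∑ j, (m₁ (Sum.inr j) + m₂ (Sum.inl j)) := by
        refine (totalDegree_mul _ _).trans (add_le_add ((totalDegree_mul _ _).trans
          (add_le_add ?_ (hprod fun j => hXpow _ _))) (hprod fun j => hmoment j _))
        refine (totalDegree_mul _ _).trans ?_
        rw [totalDegree_C, zero_add]
        exact hprod fun j => hXpow _ _
    _ = m₁.degree + m₂.degree := by
        rw [Finsupp.degree_eq_sum, Finsupp.degree_eq_sum, Fintype.sum_sum_type,
          Fintype.sum_sum_type, Finset.sum_add_distrib]
        ring

end Composition

section KernelAlgebra

open MvPolynomial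

variable {n : ℕ}

def compIntegrand (a : Fin n → ℝ) (K₁ K₂ : MvPolynomial (Fin (2 * n) ⊕ Fin (2 * n)) ℂ)
    (Z Z' W : Fin (2 * n) → ℝ) : ℂ :=
  evalP K₁ Z W * berg a Z W * evalP K₂ W Z' * berg a W Z'

def IntegratesToPolyKernel (a : Fin n → ℝ) (d : ℕ)
    (F : (Fin (2 * n) → ℝ) → (Fin (2 * n) → ℝ) → (Fin (2 * n) → ℝ) → ℂ) : Prop :=
  (∀ Z Z', Integrable (F Z Z')) ∧
    ∃ K : MvPolynomial (Fin (2 * n) ⊕ Fin (2 * n)) ℂ, K.totalDegree ≤ d ∧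
      ∀ Z Z', ∫ W, F Z Z' W = evalP K Z Z' * berg a Z Z'

namespace IntegratesToPolyKernel

variable {a : Fin n → ℝ} {d : ℕ}

lemma mono {F} (h : IntegratesToPolyKernel a d F) {d' : ℕ} (hd : d ≤ d') :
    IntegratesToPolyKernel a d' F :=
  let ⟨hint, K, hK, hval⟩ := h
  ⟨hint, K, hK.trans hd, hval⟩

lemma zero : IntegratesToPolyKernel a d 0 :=
  ⟨fun _ _ => integrable_zero _ _ _, 0, by simp, fun _ _ => by simp [evalP]⟩

lemma add {F G} (hF : IntegratesToPolyKernel a d F) (hG : IntegratesToPolyKernel a d G) :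
    IntegratesToPolyKernel a d (F + G) := by
  obtain ⟨hFi, K, hK, hFK⟩ := hF
  obtain ⟨hGi, L, hL, hGL⟩ := hG
  refine ⟨fun Z Z' => (hFi Z Z').add (hGi Z Z'), K + L,
    (totalDegree_add _ _).trans (max_le hK hL), fun Z Z' => ?_⟩
  simp only [Pi.add_apply]
  rw [integral_add (hFi Z Z') (hGi Z Z'), hFK, hGL, evalP, evalP, evalP, map_add, add_mul]

lemma finset_sum {ι : Type*} (s : Finset ι) {F : ι → _}
    (h : ∀ i ∈ s, IntegratesToPolyKernel a d (F i)) :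
    IntegratesToPolyKernel a d (∑ i ∈ s, F i) :=
  Finset.sum_induction F _ (fun _ _ => add) zero h

end IntegratesToPolyKernel

lemma integratesToPolyKernel_monomial {a : Fin n → ℝ} (ha : ∀ k, 0 < a k)
    (m₁ m₂ : (Fin (2 * n) ⊕ Fin (2 * n)) →₀ ℕ) (c₁ c₂ : ℂ) :
    IntegratesToPolyKernel a (m₁.degree + m₂.degree)
      (compIntegrand a (monomial m₁ c₁) (monomial m₂ c₂)) := by
  set g := fun (Z Z' : Fin (2 * n) → ℝ) (j : Fin (2 * n)) =>
    gaussWeight (a (pairIdx j) / 2) (evalP (shiftPoly a j) Z Z')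
  have hα (j : Fin (2 * n)) : 0 < a (pairIdx j) / 2 := half_pos (ha _)
  have hmass (Z Z' : Fin (2 * n) → ℝ) : ∏ j, ∫ u, g Z Z' j u ≠ 0 :=
    Finset.prod_ne_zero_iff.2 fun j _ => by
      rw [integral_gaussWeight (hα j)]
      exact mul_ne_zero (by simp [cpow_eq_zero_iff, Real.pi_ne_zero, (ha _).ne']) (exp_ne_zero _)
  have hF (Z Z' : Fin (2 * n) → ℝ) : compIntegrand a (monomial m₁ c₁) (monomial m₂ c₂) Z Z'
      = fun W => c₁ * c₂ * (∏ j, (Z j : ℂ) ^ m₁ (Sum.inl j)) * (∏ j, (Z' j : ℂ) ^ m₂ (Sum.inr j))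
          * berg a Z Z' * (∏ j, ∫ u, g Z Z' j u)⁻¹
          * ∏ j, (W j : ℂ) ^ (m₁ (Sum.inr j) + m₂ (Sum.inl j)) * g Z Z' j (W j) := by
    funext W
    have hberg := berg_mul_berg ha Z Z' W
    simp only [compIntegrand, evalP_monomial, Finset.prod_mul_distrib, pow_add]
    field_simp [hmass Z Z']
    linear_combination c₁ * c₂ * (∏ j, (Z j : ℂ) ^ m₁ (Sum.inl j))
      * (∏ j, (Z' j : ℂ) ^ m₂ (Sum.inr j)) * (∏ j, (W j : ℂ) ^ m₁ (Sum.inr j))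
      * (∏ j, (W j : ℂ) ^ m₂ (Sum.inl j)) * hberg
  simp only [g] at hmass hF
  refine ⟨fun Z Z' => ?_, composedMonomial a m₁ m₂ (c₁ * c₂),
    totalDegree_composedMonomial_le a m₁ m₂ _, fun Z Z' => ?_⟩
  · rw [hF]
    exact (integrable_prod_pow_mul_gaussWeight hα _ _).const_mul _
  · rw [hF, integral_const_mul, integral_prod_pow_mul_gaussWeight hα, Finset.prod_mul_distrib,
      evalP_composedMonomial]
    field_simp [hmass Z Z']

lemma compIntegrand_eq_sum (a : Fin n → ℝ) (K₁ K₂ : MvPolynomial (Fin (2 * n) ⊕ Fin (2 * n)) ℂ) :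
    compIntegrand a K₁ K₂ = ∑ m₁ ∈ K₁.support, ∑ m₂ ∈ K₂.support,
      compIntegrand a (monomial m₁ (K₁.coeff m₁)) (monomial m₂ (K₂.coeff m₂)) := by
  funext Z Z' W
  simp only [Finset.sum_apply, compIntegrand]
  conv_lhs => rw [K₁.as_sum, K₂.as_sum]
  simp only [evalP, map_sum, Finset.sum_mul, Finset.mul_sum]
  exact Finset.sum_comm

end KernelAlgebra

theorem stmt16_general (n : ℕ) (a : Fin n → ℝ) (ha : ∀ j, 0 < a j)
    (K₁ K₂ : MvPolynomial (Fin (2*n) ⊕ Fin (2*n)) ℂ) :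
    (∀ Z Z' : Fin (2*n) → ℝ,
      Integrable (fun W => evalP K₁ Z W * berg a Z W * evalP K₂ W Z' * berg a W Z')) ∧
    ∃ K₃ : MvPolynomial (Fin (2*n) ⊕ Fin (2*n)) ℂ,
      K₃.totalDegree ≤ K₁.totalDegree + K₂.totalDegree ∧
      ∀ Z Z' : Fin (2*n) → ℝ,
        (∫ W, evalP K₁ Z W * berg a Z W * evalP K₂ W Z' * berg a W Z') =
          evalP K₃ Z Z' * berg a Z Z' := by
  have h : IntegratesToPolyKernel a (K₁.totalDegree + K₂.totalDegree) (compIntegrand a K₁ K₂) := by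
    rw [compIntegrand_eq_sum]
    refine .finset_sum _ fun m₁ hm₁ => .finset_sum _ fun m₂ hm₂ => ?_
    exact (integratesToPolyKernel_monomial ha m₁ m₂ _ _).mono
      (add_le_add (MvPolynomial.le_totalDegree hm₁) (MvPolynomial.le_totalDegree hm₂))
  exact h

/-- The polynomial-times-Bergman kernels form a filtered algebra under
composition: `∫ K₁(Z,W)𝒫(Z,W) K₂(W,Z')𝒫(W,Z') dW = K₃(Z,Z')𝒫(Z,Z')` with
`deg K₃ ≤ deg K₁ + deg K₂`, the integral converging absolutely. -/
theorem stmt16 (n : ℕ) (hn : 1 ≤ n) (a : Fin n → ℝ) (ha : ∀ j, 0 < a j)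
    (K₁ K₂ : MvPolynomial (Fin (2*n) ⊕ Fin (2*n)) ℂ) :
    (∀ Z Z' : Fin (2*n) → ℝ,
      Integrable (fun W => evalP K₁ Z W * berg a Z W * evalP K₂ W Z' * berg a W Z')) ∧
    ∃ K₃ : MvPolynomial (Fin (2*n) ⊕ Fin (2*n)) ℂ,
      K₃.totalDegree ≤ K₁.totalDegree + K₂.totalDegree ∧
      ∀ Z Z' : Fin (2*n) → ℝ,
        (∫ W, evalP K₁ Z W * berg a Z W * evalP K₂ W Z' * berg a W Z') =
          evalP K₃ Z Z' * berg a Z Z' :=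
  stmt16_general n a ha K₁ K₂
end
end
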